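/- For any permutation π of {0,1}^n and the identity ι, (1/2)·∑_x d_H(π(x), ι(x)) ≤ d_{H_n}(π, ι), where d_{H_n} is the distance in the Cayley graph H_n. -/

import Mathlib

/-- The action of a multiple-control Toffoli gate with target line `t` and
polarity pattern `p` on the control lines: flip the target bit iff every
other line matches the pattern. -/
def mcToffoliFun (n : ℕ) (t : Fin n) (p : Fin n → Bool) (x : Fin n → Bool) :
    Fin n → Bool :=
  if ∀ j, j ≠ t → x j = p j then Function.update x t (!(x t)) else x

theorem mcToffoliFun_involutive (n : ℕ) (t : Fin n) (p : Fin n → Bool) :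
    Function.Involutive (mcToffoliFun n t p) := by
  intro x
  unfold mcToffoliFun
  by_cases h : ∀ j, j ≠ t → x j = p j
  · have h2 : ∀ j, j ≠ t → Function.update x t (!(x t)) j = p j := by
      intro j hj
      rw [Function.update_of_ne hj]
      exact h j hj
  
    simp [if_pos h, if_pos h2, Function.update_idem]
  · simp [if_neg h]

/-- A multiple-control Toffoli gate as a permutation of `{0,1}ⁿ`. -/
def mcToffoliPerm (n : ℕ) (t : Fin n) (p : Fin n → Bool) :
    Equiv.Perm (Fin n → Bool) :=
  (mcToffoliFun_involutive n t p).toPerm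

/-- The set of all multiple-control Toffoli gates on `n` lines. -/
def mcToffoliSet (n : ℕ) : Set (Equiv.Perm (Fin n → Bool)) :=
  {σ | ∃ t p, σ = mcToffoliPerm n t p}
/-- The (undirected) Cayley graph of a group `G` with connecting set `C`:
two distinct elements are adjacent iff one is obtained from the other by left
multiplication by a generator. -/
def cayleyGraph {G : Type*} [Group G] (C : Set G) : SimpleGraph G where
  Adj g h := g ≠ h ∧ ∃ c ∈ C, h = c * g ∨ g = c * h
  symm := by
    refine ⟨?_⟩
    rintro g h ⟨hne, c, hc, hch⟩
    exact ⟨hne.symm, c, hc, hch.symm⟩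
  loopless := by
    refine ⟨?_⟩
    rintro g ⟨hne, -⟩
    exact hne rfl

/-! Every MC-Toffoli gate is the transposition of two strings at Hamming distance 1, so one
step in the Cayley graph changes the total displacement `∑ₓ d_H(σ x, τ x)` by at most 2, and
the displacement is at most twice the length of any path. The graph is connected because such
transpositions generate all transpositions: `a` is joined to `b` by correcting one differing
coordinate at a time. -/

open Equiv Subgroup

section Hamming

variable {ι β : Type*} [Fintype ι] [DecidableEq ι] [DecidableEq β]

theorem hammingDist_update_self_right {x : ι → β} {t : ι} {v : β} (h : x t ≠ v) :
    hammingDist x (Function.update x t v) = 1 := by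
  rw [hammingDist, Finset.card_eq_one]
  refine ⟨t, Finset.ext fun j => ?_⟩
  by_cases hj : j = t
  · subst hj; simpa using h
  · simp [hj]

theorem hammingDist_update_add_one {x y : ι → β} {t : ι} (h : x t ≠ y t) :
    hammingDist (Function.update x t (y t)) y + 1 = hammingDist x y := by
  have hfilter : ({i | Function.update x t (y t) i ≠ y i} : Finset ι) =
      ({i | x i ≠ y i} : Finset ι).erase t := by
    ext j
    by_cases hj : j = t
    · subst hj; simp
    · simp [hj]
  rw [hammingDist, hammingDist, hfilter, Finset.card_erase_add_one (by simpa using h)]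

theorem exists_update_eq_of_hammingDist_eq_one {a b : ι → β} (h : hammingDist a b = 1) :
    ∃ t, a t ≠ b t ∧ Function.update a t (b t) = b := by
  obtain ⟨t, ht⟩ := Finset.card_eq_one.mp h
  have hdiff : ∀ j, a j ≠ b j ↔ j = t := fun j => by
    simpa using congrArg (j ∈ ·) ht
  exact ⟨t, (hdiff t).mpr rfl,
    Function.update_eq_iff.mpr ⟨rfl, fun j hj => not_not.mp (mt (hdiff j).mp hj)⟩⟩

def hammingSwaps (ι β : Type*) [Fintype ι] [DecidableEq β] : Set (Perm (ι → β)) :=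
  {σ | ∃ a b, hammingDist a b = 1 ∧ σ = swap a b}

theorem swap_mem_closure_hammingSwaps (a b : ι → β) :
    swap a b ∈ closure (hammingSwaps ι β) := by
  induction hab : hammingDist a b generalizing a with
  | zero => rw [hammingDist_eq_zero.mp hab, swap_self]; exact one_mem _
  | succ k ih =>
    obtain ⟨t, ht⟩ : ∃ t, a t ≠ b t := by
      by_contra! h
      exact absurd (hammingDist_eq_zero.mpr (funext h)) (by omega)
    have hstep : swap a (Function.update a t (b t)) ∈ closure (hammingSwaps ι β) :=
      subset_closure ⟨a, _, hammingDist_update_self_right ht, rfl⟩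
    have hrest := ih (Function.update a t (b t)) (by have := hammingDist_update_add_one ht; omega)
    exact SubmonoidClass.swap_mem_trans _ hstep hrest

theorem closure_hammingSwaps [Finite β] : closure (hammingSwaps ι β) = ⊤ := by
  rw [eq_top_iff, ← Perm.closure_isSwap, closure_le]
  rintro _ ⟨a, b, -, rfl⟩
  exact swap_mem_closure_hammingSwaps a b

end Hamming

section PermHammingDist

variable {ι β : Type*} [Fintype ι] [DecidableEq ι] [Fintype β] [DecidableEq β]

def permHammingDist (σ τ : Perm (ι → β)) : ℕ :=
  ∑ x, hammingDist (σ x) (τ x)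

theorem permHammingDist_self (σ : Perm (ι → β)) : permHammingDist σ σ = 0 := by
  simp [permHammingDist]

theorem permHammingDist_comm (σ τ : Perm (ι → β)) :
    permHammingDist σ τ = permHammingDist τ σ := by
  simp only [permHammingDist, hammingDist_comm]

theorem permHammingDist_triangle (σ τ ρ : Perm (ι → β)) :
    permHammingDist σ ρ ≤ permHammingDist σ τ + permHammingDist τ ρ := by
  rw [permHammingDist, permHammingDist, permHammingDist, ← Finset.sum_add_distrib]
  exact Finset.sum_le_sum fun x _ => hammingDist_triangle _ _ _

theorem permHammingDist_mul_self (c σ : Perm (ι → β)) :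
    permHammingDist (c * σ) σ = permHammingDist c 1 :=
  Equiv.sum_comp σ fun y => hammingDist (c y) y

theorem permHammingDist_swap_one (a b : ι → β) :
    permHammingDist (swap a b) 1 = 2 * hammingDist a b := by
  obtain rfl | hab := eq_or_ne a b
  · simp [permHammingDist]
  rw [permHammingDist, Finset.sum_eq_add a b hab (fun x _ hx => ?_) (by simp) (by simp)]
  · simp [hammingDist_comm b a, two_mul]
  · simp [swap_apply_of_ne_of_ne hx.1 hx.2]

theorem permHammingDist_le_two_of_adj {σ τ : Perm (ι → β)}
    (h : (cayleyGraph (hammingSwaps ι β)).Adj σ τ) : permHammingDist σ τ ≤ 2 := by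
  obtain ⟨-, _, ⟨a, b, hab, rfl⟩, rfl | rfl⟩ := h
  · rw [permHammingDist_comm, permHammingDist_mul_self, permHammingDist_swap_one, hab]
  · rw [permHammingDist_mul_self, permHammingDist_swap_one, hab]

end PermHammingDist

theorem SimpleGraph.Walk.le_mul_length {V : Type*} {G : SimpleGraph V} (d : V → V → ℕ)
    (k : ℕ) (hself : ∀ u, d u u = 0) (htriangle : ∀ u v w, d u w ≤ d u v + d v w)
    (hadj : ∀ u v, G.Adj u v → d u v ≤ k) {u v : V} (p : G.Walk u v) :
    d u v ≤ k * p.length := by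
  induction p with
  | nil => simp [hself]
  | cons h p ih =>
    rw [SimpleGraph.Walk.length_cons, mul_add_one]
    exact (htriangle _ _ _).trans (by linarith [hadj _ _ h])

theorem SimpleGraph.Reachable.le_mul_dist {V : Type*} {G : SimpleGraph V} (d : V → V → ℕ)
    (k : ℕ) (hself : ∀ u, d u u = 0) (htriangle : ∀ u v w, d u w ≤ d u v + d v w)
    (hadj : ∀ u v, G.Adj u v → d u v ≤ k) {u v : V} (h : G.Reachable u v) :
    d u v ≤ k * G.dist u v := by
  obtain ⟨p, hp⟩ := h.exists_walk_length_eq_dist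
  exact hp ▸ p.le_mul_length d k hself htriangle hadj

theorem cayleyGraph_reachable_mul_self {G : Type*} [Group G] {C : Set G} {c : G} (hc : c ∈ C)
    (g : G) : (cayleyGraph C).Reachable (c * g) g := by
  by_cases h : c * g = g
  · rw [h]
  · exact SimpleGraph.Adj.reachable ⟨h, c, hc, Or.inr rfl⟩

theorem cayleyGraph_reachable_one_of_mem_closure {G : Type*} [Group G] {C : Set G} {g : G}
    (hg : g ∈ closure C) : (cayleyGraph C).Reachable g 1 := by
  induction hg using closure_induction_left with
  | one => rfl
  | mul_left c hc y _ ih => exact (cayleyGraph_reachable_mul_self hc y).trans ih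
  | inv_mul_cancel c hc y _ ih =>
    have hback := cayleyGraph_reachable_mul_self hc (c⁻¹ * y)
    rw [mul_inv_cancel_left] at hback
    exact hback.symm.trans ih

theorem mcToffoliPerm_eq_swap (n : ℕ) (t : Fin n) (p : Fin n → Bool) :
    mcToffoliPerm n t p = swap (Function.update p t false) (Function.update p t true) := by
  ext y : 1
  change mcToffoliFun n t p y = _
  by_cases h : ∀ j, j ≠ t → y j = p j
  · obtain ⟨b, rfl⟩ : ∃ b, y = Function.update p t b :=
      ⟨y t, Function.eq_update_iff.mpr ⟨rfl, h⟩⟩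
    rw [mcToffoliFun, if_pos h]
    cases b <;> simp
  · have hne : ∀ b, y ≠ Function.update p t b := fun b hy =>
      h fun j hj => by rw [hy, Function.update_of_ne hj]
    rw [mcToffoliFun, if_neg h, swap_apply_of_ne_of_ne (hne false) (hne true)]

theorem mcToffoliSet_eq_hammingSwaps (n : ℕ) : mcToffoliSet n = hammingSwaps (Fin n) Bool := by
  ext σ
  constructor
  · rintro ⟨t, p, rfl⟩
    refine ⟨_, _, ?_, mcToffoliPerm_eq_swap n t p⟩
    rw [← Function.update_idem (f := p) (a := t) false true]
    exact hammingDist_update_self_right (by simp)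
  · rintro ⟨a, b, hab, rfl⟩
    obtain ⟨t, hne, hb⟩ := exists_update_eq_of_hammingDist_eq_one hab
    refine ⟨t, a, ?_⟩
    rw [mcToffoliPerm_eq_swap, ← hb]
    cases ha : a t <;> cases hbt : b t <;> simp only [ha, hbt, ne_eq, not_true_eq_false] at hne ⊢
    · rw [← ha, Function.update_eq_self]
    · rw [← ha, Function.update_eq_self, swap_comm]

/-- Half the total Hamming displacement of a permutation is a lower bound for
its distance to the identity in the Cayley graph `H_n`. -/
theorem displacement_le_cayley_dist (n : ℕ) (π : Equiv.Perm (Fin n → Bool)) :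
    ∑ x : Fin n → Bool, hammingDist (π x) x ≤
      2 * (cayleyGraph (mcToffoliSet n)).dist π 1 := by
  rw [mcToffoliSet_eq_hammingSwaps]
  -- `SimpleGraph.dist` is `0` between unreachable vertices, so connectivity is essential.
  have hreach : (cayleyGraph (hammingSwaps (Fin n) Bool)).Reachable π 1 :=
    cayleyGraph_reachable_one_of_mem_closure (by rw [closure_hammingSwaps]; exact mem_top π)
  exact hreach.le_mul_dist permHammingDist 2 permHammingDist_self permHammingDist_triangle
    fun _ _ => permHammingDist_le_two_of_adj
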